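/- For every integer n ≥ 1 and every x ∈ ℂ, x · 𝒫_n(x) = -(i/2)√((2n+1)(2n+2)) · 𝒫_{n+1}(x) + (i/2)√((2n-1)(2n)) · 𝒫_{n-1}(x); moreover x · 𝒫_0(x) = -(i/√2) · 𝒫_1(x). (Equivalently, the multiplication by the variable is represented in the basis (𝒫_n) by the hermitian Jacobi matrix with zero diagonal and entries α_n = (i/2)√((2n+1)(2n+2)) above the diagonal.) -/

import Mathlib

/-
Write `𝒫_m = √((2m)!) / (2^m m!) · F_m` with `F_m(x) = ∑_k C(m,k) (-8)^k k!/(2k)! · (a)_k`,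
where `a = 1/4 - ix/2` and `(a)_k` is the rising factorial; thus `F_m = ₂F₁(-m, a; 1/2; 2)`.
Since `x = 2i(a - 1/4)`, multiplication by `x` acts on the Pochhammer basis by
`2x (a)_k = 4i (a)_{k+1} - i(4k+1) (a)_k`, so comparing coefficients of `(a)_{k+1}` reduces the
three-term recurrence `2x F_{m+1} = -i(2m+3) F_{m+2} + 2i(m+1) F_m` to a linear identity between
binomial coefficients. The square roots enter only through the normalising constants.
-/

open MeasureTheory Complex Finset

/-- The polynomials `𝒫_m` as functions on `ℂ`. -/
noncomputable def Pc (m : ℕ) (x : ℂ) : ℂ :=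
  (Real.sqrt ((2 * m).factorial) : ℂ) *
    ∑ k ∈ Finset.range (m + 1),
      (-1 : ℂ) ^ k * (2 : ℂ) ^ (3 * (k : ℤ) - (m : ℤ)) *
        (∏ j ∈ Finset.range k, ((j : ℂ) - Complex.I * x / 2 + 1 / 4)) /
        (((2 * k).factorial : ℂ) * ((m - k).factorial : ℂ))

open Nat

noncomputable def poch (k : ℕ) (x : ℂ) : ℂ :=
  ∏ j ∈ range k, ((j : ℂ) - I * x / 2 + 1 / 4)

lemma poch_succ (k : ℕ) (x : ℂ) : poch (k + 1) x = poch k x * (k - I * x / 2 + 1 / 4) :=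
  prod_range_succ _ _

lemma two_mul_mul_poch (k : ℕ) (x : ℂ) :
    2 * x * poch k x = 4 * I * poch (k + 1) x - I * (4 * k + 1) * poch k x := by
  rw [poch_succ]
  linear_combination (2 * x * poch k x) * I_sq

noncomputable def pochCoeff (k : ℕ) : ℂ := (-8) ^ k * k ! / (2 * k)!

lemma four_mul_pochCoeff (k : ℕ) : 4 * pochCoeff k = -(2 * k + 1) * pochCoeff (k + 1) := by
  have h : ((2 * (k + 1))! : ℂ) = (2 * k + 2) * (2 * k + 1) * (2 * k)! := by
    rw [show 2 * (k + 1) = 2 * k + 1 + 1 by ring, factorial_succ, factorial_succ]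
    push_cast; ring
  rw [pochCoeff, pochCoeff, h, factorial_succ]
  have : (2 * k + 1 : ℂ) ≠ 0 := by exact_mod_cast (2 * k).succ_ne_zero
  field_simp
  push_cast
  ring

lemma choose_three_term_identity (m k : ℕ) :
    (2 * k + 1) * (m + 1).choose k + (4 * k + 5) * (m + 1).choose (k + 1)
      + 2 * (m + 1) * m.choose (k + 1) = (2 * m + 3) * (m + 2).choose (k + 1) := by
  rw [show m + 2 = m + 1 + 1 from rfl]
  have h1 := choose_succ_succ' (m + 1) k
  have h2 := choose_succ_succ' m k
  have h3 := add_one_mul_choose_eq (m + 1) k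
  have h4 := add_one_mul_choose_eq m k
  zify at *
  linear_combination (-(2 * (k : ℤ) + 2 * m + 5)) * h1 - 2 * (m + 1) * h2 - 2 * h3 - 2 * h4

lemma sum_choose_mul_poch_shift (w : ℕ → ℂ) (x : ℂ) {m N : ℕ} (h : m ≤ N) :
    ∑ k ∈ range (m + 1), (m.choose k : ℂ) * w k * poch k x
      = ∑ k ∈ range N, (m.choose (k + 1) : ℂ) * w (k + 1) * poch (k + 1) x + w 0 := by
  have hsub : range (m + 1) ⊆ range (N + 1) := range_subset_range.2 (by omega)
  rw [sum_subset hsub fun k _ hk => ?_, sum_range_succ']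
  · simp [poch]
  · rw [choose_eq_zero_of_lt (by simpa using hk)]
    simp

noncomputable def hyp2F1 (m : ℕ) (x : ℂ) : ℂ :=
  ∑ k ∈ range (m + 1), (m.choose k : ℂ) * pochCoeff k * poch k x

lemma hyp2F1_eq_sum_range_shift (x : ℂ) {m N : ℕ} (h : m ≤ N) :
    hyp2F1 m x
      = ∑ k ∈ range N, (m.choose (k + 1) : ℂ) * pochCoeff (k + 1) * poch (k + 1) x + 1 := by
  rw [hyp2F1, sum_choose_mul_poch_shift pochCoeff x h, pochCoeff]
  simp

lemma two_mul_mul_hyp2F1_succ (m : ℕ) (x : ℂ) :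
    2 * x * hyp2F1 (m + 1) x
      = ∑ k ∈ range (m + 2), (4 * I * ((m + 1).choose k : ℂ) * pochCoeff k
          - I * (4 * k + 5) * ((m + 1).choose (k + 1) : ℂ) * pochCoeff (k + 1)) * poch (k + 1) x
        - I := by
  have hshift := sum_choose_mul_poch_shift (fun k => (4 * k + 1) * pochCoeff k) x
    (by omega : m + 1 ≤ m + 2)
  have hmul : 2 * x * hyp2F1 (m + 1) x
      = 4 * I * ∑ k ∈ range (m + 2), ((m + 1).choose k : ℂ) * pochCoeff k * poch (k + 1) x
        - I * ∑ k ∈ range (m + 2), ((m + 1).choose k : ℂ) * ((4 * k + 1) * pochCoeff k)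
            * poch k x := by
    rw [hyp2F1, mul_sum, mul_sum, mul_sum, ← sum_sub_distrib]
    exact sum_congr rfl fun k _ => by
      linear_combination ((m + 1).choose k * pochCoeff k) * two_mul_mul_poch k x
  rw [hmul, hshift, mul_add, mul_sum, mul_sum, ← sub_sub, ← sum_sub_distrib]
  congr 1
  · exact sum_congr rfl fun k _ => by push_cast; ring
  · simp [pochCoeff]

lemma hyp2F1_three_term_recurrence (m : ℕ) (x : ℂ) :
    2 * x * hyp2F1 (m + 1) x
      = -I * (2 * m + 3) * hyp2F1 (m + 2) x + 2 * I * (m + 1) * hyp2F1 m x := by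
  rw [two_mul_mul_hyp2F1_succ, hyp2F1_eq_sum_range_shift x le_rfl,
    hyp2F1_eq_sum_range_shift x (by omega : m ≤ m + 2)]
  have hcoeff : ∀ k, 4 * I * ((m + 1).choose k : ℂ) * pochCoeff k
      - I * (4 * k + 5) * ((m + 1).choose (k + 1) : ℂ) * pochCoeff (k + 1)
      = -I * (2 * m + 3) * ((m + 2).choose (k + 1) : ℂ) * pochCoeff (k + 1)
        + 2 * I * (m + 1) * (m.choose (k + 1) : ℂ) * pochCoeff (k + 1) := fun k => by
    have hb : ((2 * k + 1) * (m + 1).choose k + (4 * k + 5) * (m + 1).choose (k + 1)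
        + 2 * (m + 1) * m.choose (k + 1) : ℂ) = (2 * m + 3) * (m + 2).choose (k + 1) := by
      exact_mod_cast choose_three_term_identity m k
    linear_combination
      (I * (m + 1).choose k) * four_mul_pochCoeff k - (I * pochCoeff (k + 1)) * hb
  rw [sum_congr rfl fun k _ => congrArg (· * poch (k + 1) x) (hcoeff k)]
  simp only [add_mul, sum_add_distrib, mul_assoc, ← mul_sum]
  ring

lemma hyp2F1_zero (x : ℂ) : hyp2F1 0 x = 1 := by
  simp [hyp2F1, pochCoeff, poch]

lemma hyp2F1_one (x : ℂ) : hyp2F1 1 x = 2 * I * x := by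
  rw [hyp2F1_eq_sum_range_shift x le_rfl, sum_range_one, poch_succ, pochCoeff, poch,
    prod_range_zero, choose_self]
  norm_num
  ring

noncomputable def normConst (m : ℕ) : ℝ := √((2 * m)! : ℝ) / (2 ^ m * m !)

lemma Pc_eq_normConst_mul_hyp2F1 (m : ℕ) (x : ℂ) : Pc m x = normConst m * hyp2F1 m x := by
  have hterm : ∀ k ∈ range (m + 1),
      (-1 : ℂ) ^ k * (2 : ℂ) ^ (3 * (k : ℤ) - (m : ℤ)) * poch k x
          / (((2 * k)! : ℂ) * ((m - k)! : ℂ))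
        = (m.choose k : ℂ) * pochCoeff k * poch k x / (2 ^ m * m !) := fun k hk => by
    have hkm : k ≤ m := mem_range_succ_iff.1 hk
    rw [zpow_sub₀ two_ne_zero, zpow_mul, zpow_natCast, zpow_natCast, cast_choose ℂ hkm,
      pochCoeff, neg_pow (8 : ℂ)]
    have : (k ! : ℂ) ≠ 0 := by exact_mod_cast k.factorial_ne_zero
    have : (m ! : ℂ) ≠ 0 := by exact_mod_cast m.factorial_ne_zero
    field_simp
    ring
  calc Pc m x
      = √((2 * m)! : ℝ) * ∑ k ∈ range (m + 1),
          (-1 : ℂ) ^ k * (2 : ℂ) ^ (3 * (k : ℤ) - (m : ℤ)) * poch k x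
            / (((2 * k)! : ℂ) * ((m - k)! : ℂ)) := rfl
    _ = normConst m * hyp2F1 m x := by
      rw [sum_congr rfl hterm, ← sum_div, hyp2F1, normConst]
      push_cast
      ring

lemma sqrt_factorial_two_mul_succ (n : ℕ) :
    √((2 * (n + 1))! : ℝ) = √((2 * n + 1) * (2 * n + 2)) * √((2 * n)! : ℝ) := by
  rw [← Real.sqrt_mul (by positivity), show 2 * (n + 1) = 2 * n + 1 + 1 by ring,
    factorial_succ, factorial_succ]
  push_cast
  ring_nf

lemma two_mul_succ_mul_normConst_succ (n : ℕ) :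
    2 * (n + 1) * normConst (n + 1) = √((2 * n + 1) * (2 * n + 2)) * normConst n := by
  rw [normConst, normConst, sqrt_factorial_two_mul_succ, pow_succ, factorial_succ]
  push_cast
  field_simp

lemma sqrt_mul_normConst_succ (n : ℕ) :
    √((2 * n + 1) * (2 * n + 2)) * normConst (n + 1) = (2 * n + 1) * normConst n := by
  have hsq := Real.mul_self_sqrt (by positivity : (0 : ℝ) ≤ (2 * n + 1) * (2 * n + 2))
  have hpos : (0 : ℝ) < 2 * (n + 1) := by positivity
  refine mul_left_cancel₀ hpos.ne' ?_
  linear_combination √((2 * n + 1) * (2 * n + 2)) * two_mul_succ_mul_normConst_succ n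
    + normConst n * hsq

/-- the three-term recurrence: for `n ≥ 1`,
`x 𝒫_n(x) = -(i/2)√((2n+1)(2n+2)) 𝒫_{n+1}(x) + (i/2)√((2n-1)(2n)) 𝒫_{n-1}(x)`,
and `x 𝒫_0(x) = -(i/√2) 𝒫_1(x)`. -/
theorem stmt3 :
    (∀ n : ℕ, 1 ≤ n → ∀ x : ℂ,
        x * Pc n x
          = -(Complex.I / 2) * (Real.sqrt ((2 * (n : ℝ) + 1) * (2 * (n : ℝ) + 2)) : ℂ) *
              Pc (n + 1) x
            + (Complex.I / 2) * (Real.sqrt ((2 * (n : ℝ) - 1) * (2 * (n : ℝ))) : ℂ) *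
              Pc (n - 1) x)
    ∧ (∀ x : ℂ, x * Pc 0 x = -(Complex.I / (Real.sqrt 2 : ℂ)) * Pc 1 x) := by
  refine ⟨fun n hn x => ?_, fun x => ?_⟩
  · obtain ⟨m, rfl⟩ : ∃ m, n = m + 1 := ⟨n - 1, by omega⟩
    have hup := congrArg ((↑) : ℝ → ℂ) (sqrt_mul_normConst_succ (m + 1))
    have hdown := congrArg ((↑) : ℝ → ℂ) (two_mul_succ_mul_normConst_succ m)
    simp only [Pc_eq_normConst_mul_hyp2F1, add_tsub_cancel_right]
    rw [show (2 * ((m + 1 : ℕ) : ℝ) - 1) * (2 * ((m + 1 : ℕ) : ℝ))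
        = (2 * m + 1) * (2 * m + 2) by push_cast; ring]
    push_cast at hup hdown ⊢
    linear_combination (normConst (m + 1) / 2 : ℂ) * hyp2F1_three_term_recurrence m x
      + (I / 2 * hyp2F1 (m + 2) x) * hup + (I / 2 * hyp2F1 m x) * hdown
  · have hσ0 : normConst 0 = 1 := by simp [normConst]
    have hσ1 : normConst 1 = √2 / 2 := by norm_num [normConst]
    have hsqrt2 : ((√2 : ℝ) : ℂ) ≠ 0 := ofReal_ne_zero.2 (by positivity)
    rw [Pc_eq_normConst_mul_hyp2F1, Pc_eq_normConst_mul_hyp2F1, hyp2F1_zero, hyp2F1_one, hσ0,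
      hσ1]
    push_cast
    field_simp
    linear_combination x * I_sq
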